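/- For every check w ∈ ℤ × ℤ, the syndrome {w, w + (0,1), w + (0,−1)} — which consists of one check of each of the three colours — is generated by an error set of size 3, and is not generated by any error set of size at most 2; hence the minimum cardinality of an error set generating this syndrome is exactly 3. -/
import Mathlib


/-- A check of the dual lattice: a point of `ℤ × ℤ`. -/
abbrev Check : Type := ℤ × ℤ

/-- The upward triangular face at `v`. -/
def upFace (v : Check) : Finset Check := {v, v + (1, 0), v + (1, 1)}

/-- The downward triangular face at `v`. -/
def downFace (v : Check) : Finset Check := {v, v + (0, 1), v + (1, 1)}

/-- A face of the dual lattice of the hexagonal colour code. -/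
def IsFace (f : Finset Check) : Prop := ∃ v : Check, f = upFace v ∨ f = downFace v

/-- An error set: a finite set of faces. -/
def IsErrorSet (E : Finset (Finset Check)) : Prop := ∀ f ∈ E, IsFace f

/-- The syndrome of `E`: the checks lying in an odd number of members of `E`. -/
def syndrome (E : Finset (Finset Check)) : Finset Check :=
  (E.sup id).filter fun v => Odd (E.filter fun f => v ∈ f).card

/-- `E` generates the syndrome `S`. -/
def Generates (E : Finset (Finset Check)) (S : Finset Check) : Prop :=
  IsErrorSet E ∧ syndrome E = S

/-- The colour of a check `(x, y)` is `(x + y) mod 3`. -/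
def colour (v : Check) : ZMod 3 := ((v.1 + v.2 : ℤ) : ZMod 3)

/-- Two checks are adjacent if their difference is one of six lattice vectors. -/
def Adjacent (u v : Check) : Prop :=
  u - v ∈ ({(1, 0), (-1, 0), (0, 1), (0, -1), (1, 1), (-1, -1)} : Finset Check)

/-- A syndrome is separated if it contains no two distinct adjacent checks. -/
def Separated (S : Finset Check) : Prop :=
  ∀ u ∈ S, ∀ v ∈ S, u ≠ v → ¬ Adjacent u v

lemma syndrome_singleton (f : Finset Check) : syndrome {f} = f := by
  ext v
  simp [syndrome, Finset.filter_singleton]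
  intro h
  simp [h]

lemma face_card (f : Finset Check) (hf : IsFace f) : f.card = 3 := by
  obtain ⟨v, h | h⟩ := hf <;> subst h <;>
    simp [upFace, downFace, Finset.card_insert_of_notMem, Prod.ext_iff]

lemma syndrome_pair (f g : Finset Check) (h : f ≠ g) :
    syndrome {f, g} = (f ∪ g) \ (f ∩ g) := by
  ext v
  simp only [syndrome, Finset.mem_filter, Finset.sup_insert, Finset.sup_singleton, id,
    Finset.mem_union, Finset.mem_sdiff, Finset.mem_inter, Finset.filter_insert,
    Finset.filter_singleton]
  by_cases hf : v ∈ f <;> by_cases hg : v ∈ g <;>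
    simp [hf, hg, Finset.card_insert_of_notMem, h, Nat.odd_iff]

lemma faces_ne_1 (x y : ℤ) : downFace (x, y + -1) ≠ upFace (x, y) := by
  intro h
  have := Finset.ext_iff.mp h (x, y - 1)
  simp [downFace, upFace, Prod.ext_iff] at this <;> omega

lemma faces_ne_2 (x y : ℤ) : downFace (x, y + -1) ≠ downFace (x, y) := by
  intro h
  have := Finset.ext_iff.mp h (x, y - 1)
  simp [downFace, Prod.ext_iff] at this <;> omega

lemma faces_ne_3 (x y : ℤ) : upFace (x, y) ≠ downFace (x, y) := by
  intro h
  have := Finset.ext_iff.mp h (x + 1, y)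
  simp [downFace, upFace, Prod.ext_iff] at this <;> omega

lemma syndrome_three (w : Check) :
    syndrome {downFace (w + (0, -1)), upFace w, downFace w} =
      {w, w + (0, 1), w + (0, -1)} := by
  obtain ⟨x, y⟩ := w
  have h12 := faces_ne_1 x y
  have h13 := faces_ne_2 x y
  have h23 := faces_ne_3 x y
  ext v
  obtain ⟨a, b⟩ := v
  simp only [syndrome, Finset.mem_filter, Finset.sup_insert, Finset.sup_singleton, id,
    Finset.mem_union]
  rw [Finset.card_filter, Finset.sum_insert (by simp [h12, h13]),
    Finset.sum_insert (by simp [h23]), Finset.sum_singleton]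
  by_cases h1 : ((a,b) : Check) ∈ downFace ((x,y) + (0, -1)) <;>
  by_cases h2 : ((a,b) : Check) ∈ upFace (x,y) <;>
  by_cases h3 : ((a,b) : Check) ∈ downFace (x,y) <;>
    simp only [h1, h2, h3, if_true, if_false] <;>
    simp only [upFace, downFace, Prod.mk_add_mk, Finset.mem_insert,
      Finset.mem_singleton, Prod.mk.injEq] at h1 h2 h3 ⊢ <;>
    simp [Nat.odd_iff] <;>
    omega

lemma target_card (w : Check) :
    ({w, w + (0, 1), w + (0, -1)} : Finset Check).card = 3 := by
  obtain ⟨x, y⟩ := w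
  rw [Finset.card_insert_of_notMem (by simp [Prod.ext_iff] <;> omega),
    Finset.card_insert_of_notMem (by simp [Prod.ext_iff] <;> omega),
    Finset.card_singleton]

/-- For every check `w`, the three-defect syndrome
`{w, w + (0,1), w + (0,-1)}` (one check of each colour) is generated by an error set of size
3, is not generated by any error set of size at most 2, and hence the minimum size of a
generating error set is exactly 3. -/
theorem three_defect_min_weight (w : Check) :
    (∃ E : Finset (Finset Check),
      Generates E {w, w + (0, 1), w + (0, -1)} ∧ E.card = 3) ∧
    (¬ ∃ E : Finset (Finset Check),
      Generates E {w, w + (0, 1), w + (0, -1)} ∧ E.card ≤ 2) ∧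
    IsLeast {n : ℕ | ∃ E : Finset (Finset Check),
      Generates E {w, w + (0, 1), w + (0, -1)} ∧ E.card = n} 3 := by
  have hex : ∃ E : Finset (Finset Check),
      Generates E {w, w + (0, 1), w + (0, -1)} ∧ E.card = 3 := by
    refine ⟨{downFace (w + (0, -1)), upFace w, downFace w},
      ⟨?_, syndrome_three w⟩, ?_⟩
    · intro f hf
      simp only [Finset.mem_insert, Finset.mem_singleton] at hf
      rcases hf with h | h | h
      · exact ⟨w + (0, -1), Or.inr h⟩
      · exact ⟨w, Or.inl h⟩
      · exact ⟨w, Or.inr h⟩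
    · obtain ⟨x, y⟩ := w
      rw [Finset.card_insert_of_notMem
          (by simp [faces_ne_1 x y, faces_ne_2 x y]),
        Finset.card_insert_of_notMem (by simp [faces_ne_3 x y]),
        Finset.card_singleton]
  have hne : ¬ ∃ E : Finset (Finset Check),
      Generates E {w, w + (0, 1), w + (0, -1)} ∧ E.card ≤ 2 := by
    rintro ⟨E, ⟨hErr, hSyn⟩, hcard⟩
    interval_cases h : E.card
    · -- card 0
      rw [Finset.card_eq_zero.mp h, show syndrome ∅ = ∅ by simp [syndrome]] at hSyn
      have : w ∈ (∅ : Finset Check) := by rw [hSyn]; simp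
      simp at this
    · -- card 1
      obtain ⟨f, rfl⟩ := Finset.card_eq_one.mp h
      rw [syndrome_singleton] at hSyn
      obtain ⟨v, hv | hv⟩ := hErr f (by simp) <;>
        rw [hv] at hSyn
      · have h1 : v ∈ ({w, w + (0, 1), w + (0, -1)} : Finset Check) := by
          rw [← hSyn]; simp [upFace]
        have h2 : v + (1, 1) ∈ ({w, w + (0, 1), w + (0, -1)} : Finset Check) := by
          rw [← hSyn]; simp [upFace]
        obtain ⟨x, y⟩ := w; obtain ⟨a, b⟩ := v
        simp [Prod.ext_iff] at h1 h2
        omega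
      · have h1 : v ∈ ({w, w + (0, 1), w + (0, -1)} : Finset Check) := by
          rw [← hSyn]; simp [downFace]
        have h2 : v + (1, 1) ∈ ({w, w + (0, 1), w + (0, -1)} : Finset Check) := by
          rw [← hSyn]; simp [downFace]
        obtain ⟨x, y⟩ := w; obtain ⟨a, b⟩ := v
        simp [Prod.ext_iff] at h1 h2
        omega
    · -- card 2
      obtain ⟨f, g, hfg, rfl⟩ := Finset.card_eq_two.mp h
      rw [syndrome_pair f g hfg] at hSyn
      have hcf : f.card = 3 := face_card f (hErr f (by simp))
      have hcg : g.card = 3 := face_card g (hErr g (by simp))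
      have h1 : (f ∪ g).card + (f ∩ g).card = 6 := by
        rw [Finset.card_union_add_card_inter, hcf, hcg]
      have h2 : ((f ∪ g) \ (f ∩ g)).card = (f ∪ g).card - (f ∩ g).card :=
        Finset.card_sdiff_of_subset (Finset.inter_subset_union)
      have h3 : (f ∩ g).card ≤ (f ∪ g).card :=
        Finset.card_le_card Finset.inter_subset_union
      rw [hSyn, target_card] at h2
      omega
  refine ⟨hex, hne, ⟨hex, ?_⟩⟩
  rintro n ⟨E, hE, rfl⟩
  by_contra hn
  exact hne ⟨E, hE, by omega⟩
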